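/- arXiv:1401.0584 — 7 statements merged into one kernel-verified Lean document; each statement's English description precedes it below -/
import Mathlib

section
/- If (g, [·,...,·], α) is an n-ary multiplicative Hom-Nambu-Lie superalgebra and β : g → g is an algebra morphism commuting with α (β∘α = α∘β), then (g, β∘[·,...,·], β∘α) is again an n-ary multiplicative Hom-Nambu-Lie superalgebra. -/
open Finset

/-- An `(m+1)`-ary multiplicative Hom-Nambu-Lie superalgebra structure on a `K`-vector space
`V` with `ℤ/2`-grading `gr`, `(m+1)`-linear bracket `br` and twist map `α`. -/
structure IsHNLS (K : Type*) {V : Type*} [Field K] [AddCommGroup V] [Module K V]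
    (m : ℕ) (gr : ZMod 2 → Submodule K V)
    (br : MultilinearMap K (fun _ : Fin (m + 1) => V) V)
    (α : V →ₗ[K] V) : Prop where
  even_alpha : ∀ (d : ZMod 2), ∀ v ∈ gr d, α v ∈ gr d
  even_br : ∀ (d : Fin (m + 1) → ZMod 2) (x : Fin (m + 1) → V),
      (∀ i, x i ∈ gr (d i)) → br x ∈ gr (∑ i, d i)
  skew : ∀ (d : Fin (m + 1) → ZMod 2) (x : Fin (m + 1) → V),
      (∀ i, x i ∈ gr (d i)) → ∀ i j : Fin (m + 1), (i : ℕ) + 1 = (j : ℕ) →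
      br x = -((-1 : K) ^ (d i * d j).val) • br (x ∘ Equiv.swap i j)
  mult : ∀ x : Fin (m + 1) → V, α (br x) = br fun i => α (x i)
  jacobi : ∀ (dx : Fin m → ZMod 2) (dy : Fin (m + 1) → ZMod 2)
      (x : Fin m → V) (y : Fin (m + 1) → V),
      (∀ i, x i ∈ gr (dx i)) → (∀ i, y i ∈ gr (dy i)) →
      br (Fin.snoc (fun i => α (x i)) (br y)) =
        ∑ i : Fin (m + 1),
          ((-1 : K) ^ (((∑ j, dx j) * ∑ j ∈ univ.filter (fun j => j < i), dy j).val)) •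
            br (Function.update (fun j => α (y j)) i (br (Fin.snoc x (y i))))

/-- Theorem 1.4: twisting a multiplicative Hom-Nambu-Lie superalgebra by a morphism `β`
commuting with `α` yields again a multiplicative Hom-Nambu-Lie superalgebra. -/
theorem twist_by_morphism {K V : Type*} [Field K] [AddCommGroup V] [Module K V] (m : ℕ)
    (gr : ZMod 2 → Submodule K V)
    (br : MultilinearMap K (fun _ : Fin (m + 1) => V) V)
    (α β : V →ₗ[K] V)
    (h : IsHNLS K m gr br α)
    (hβeven : ∀ (d : ZMod 2), ∀ v ∈ gr d, β v ∈ gr d)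
    (hβbr : ∀ x : Fin (m + 1) → V, β (br x) = br fun i => β (x i))
    (hβα : ∀ v, β (α v) = α (β v)) :
    IsHNLS K m gr (β.compMultilinearMap br) (β ∘ₗ α) := by
  constructor
  · intro d v hv
    exact hβeven d _ (h.even_alpha d v hv)
  · intro d x hx
    exact hβeven _ _ (h.even_br d x hx)
  · intro d x hx i j hij
    simp only [LinearMap.compMultilinearMap_apply]
    rw [h.skew d x hx i j hij]
    simp only [map_neg, map_smul]
  · intro x
    simp only [LinearMap.compMultilinearMap_apply, LinearMap.comp_apply]
    rw [hβbr, h.mult, hβbr, hβbr]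
    exact congrArg br (funext fun i => congrArg β (hβα (x i)).symm)
  · intro dx dy x y hx hy
    have key := h.jacobi dx dy x y hx hy
    simp only [LinearMap.compMultilinearMap_apply, LinearMap.comp_apply]
    have L : β (β (br (Fin.snoc (fun i => α (x i)) (br y)))) =
        β (br (Fin.snoc (fun i => β (α (x i))) (β (br y)))) := by
      congr 1
      rw [hβbr]
      congr 1
      funext k
      refine Fin.lastCases ?_ (fun j => ?_) k <;> simp
    have R : ∀ i : Fin (m + 1),
        β (β (br (Function.update (fun j => α (y j)) i (br (Fin.snoc x (y i)))))) =
        β (br (Function.update (fun j => β (α (y j))) i (β (br (Fin.snoc x (y i)))))) := by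
      intro i
      congr 1
      rw [hβbr]
      congr 1
      funext k
      by_cases hk : k = i
      · subst hk; simp
      · simp [Function.update_of_ne hk]
    rw [← L, key, map_sum, map_sum]
    refine Finset.sum_congr rfl fun i _ => ?_
    rw [map_smul, map_smul, R i]
end

section
/- If (g, [·,...,·]) is an n-ary Nambu-Lie superalgebra and ρ : g → g is an endomorphism of it, then (g, ρ∘[·,...,·], ρ) is an n-ary multiplicative Hom-Nambu-Lie superalgebra. -/
open Finset

/-- Example 1.5: an n-ary Nambu-Lie superalgebra (twist = id) together with an endomorphism
`ρ` yields the n-ary multiplicative Hom-Nambu-Lie superalgebra `(g, ρ∘[·,…,·], ρ)`. -/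
theorem nambu_endo_gives_hom {K V : Type*} [Field K] [AddCommGroup V] [Module K V] (m : ℕ)
    (gr : ZMod 2 → Submodule K V)
    (br : MultilinearMap K (fun _ : Fin (m + 1) => V) V)
    (h : IsHNLS K m gr br (LinearMap.id : V →ₗ[K] V))
    (ρ : V →ₗ[K] V)
    (hρeven : ∀ (d : ZMod 2), ∀ v ∈ gr d, ρ v ∈ gr d)
    (hρbr : ∀ x : Fin (m + 1) → V, ρ (br x) = br fun i => ρ (x i)) :
    IsHNLS K m gr (ρ.compMultilinearMap br) ρ := by
  constructor
  · exact hρeven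
  · intro d x hx
    exact hρeven _ _ (h.even_br d x hx)
  · intro d x hx i j hij
    have := h.skew d x hx i j hij
    simp only [LinearMap.compMultilinearMap_apply]
    rw [this, map_smul]
  · intro x
    simp only [LinearMap.compMultilinearMap_apply]
    rw [hρbr, hρbr]
  · intro dx dy x y hx hy
    have hx' : ∀ i, ρ (x i) ∈ gr (dx i) := fun i => hρeven _ _ (hx i)
    have hy' : ∀ i, ρ (y i) ∈ gr (dy i) := fun i => hρeven _ _ (hy i)
    have hj := h.jacobi dx dy (fun i => ρ (x i)) (fun i => ρ (y i)) hx' hy'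
    simp only [LinearMap.id_coe, id_eq] at hj
    simp only [LinearMap.compMultilinearMap_apply]
    have e1 : (Fin.snoc (fun i => ρ (x i)) (ρ (br y)) : Fin (m+1) → V)
        = Fin.snoc (fun i => ρ (x i)) (br fun i => ρ (y i)) := by
      rw [hρbr]
    rw [e1, hj, map_sum]
    refine Finset.sum_congr rfl fun i _ => ?_
    rw [map_smul]
    congr 2
    have e2 : (fun j => ρ ((Fin.snoc x (y i) : Fin (m+1) → V) j))
        = Fin.snoc (fun j => ρ (x j)) (ρ (y i)) := by
      funext j
      refine Fin.lastCases ?_ ?_ j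
      · simp
      · intro j; simp
    rw [hρbr, e2]
end

section
/- Given two n-ary multiplicative Hom-Nambu-Lie superalgebras (g₁, [·,...,·]₁, α) and (g₂, [·,...,·]₂, β), the direct sum g₁ ⊕ g₂ with the componentwise bracket [u₁+v₁,...,uₙ+vₙ] := [u₁,...,uₙ]₁ + [v₁,...,vₙ]₂ and twist map (α+β)(u+v) := α(u)+β(v) is an n-ary multiplicative Hom-Nambu-Lie superalgebra. -/
/-!
The axioms of a multiplicative Hom-Nambu-Lie superalgebra are identities between expressions built
from the bracket and the twist, together with parity conditions, so they are reflected by any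
jointly injective pair of linear maps into such algebras that intertwine brackets and twists and
detect the grading. The two projections of `g₁ ⊕ g₂` form such a pair.
-/

open Finset

theorem LinearMap.map_jacobi_eq_of_intertwining {K V W : Type*} [Ring K] [AddCommGroup V]
    [Module K V] [AddCommGroup W] [Module K W] {m : ℕ}
    {brV : MultilinearMap K (fun _ : Fin (m + 1) => V) V}
    {brW : MultilinearMap K (fun _ : Fin (m + 1) => W) W}
    {αV : V →ₗ[K] V} {αW : W →ₗ[K] W}
    (f : V →ₗ[K] W)
    (hbr : ∀ x, f (brV x) = brW (f ∘ x)) (hα : ∀ v, f (αV v) = αW (f v))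
    (c : Fin (m + 1) → K) (x : Fin m → V) (y : Fin (m + 1) → V)
    (h : brW (Fin.snoc (fun i => αW (f (x i))) (brW (f ∘ y))) =
      ∑ i, c i •
        brW (Function.update (fun j => αW (f (y j))) i (brW (Fin.snoc (f ∘ x) (f (y i)))))) :
    f (brV (Fin.snoc (fun i => αV (x i)) (brV y))) =
      f (∑ i, c i • brV (Function.update (fun j => αV (y j)) i (brV (Fin.snoc x (y i))))) := by
  simp only [map_sum, map_smul, hbr, Fin.comp_snoc, Function.comp_update]
  simpa only [Function.comp_def, hα] using h

theorem IsHNLS.of_jointly_injective {K V W₁ W₂ : Type*} [Field K] [AddCommGroup V] [Module K V]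
    [AddCommGroup W₁] [Module K W₁] [AddCommGroup W₂] [Module K W₂] {m : ℕ}
    {gr : ZMod 2 → Submodule K V} {gr₁ : ZMod 2 → Submodule K W₁}
    {gr₂ : ZMod 2 → Submodule K W₂}
    {br : MultilinearMap K (fun _ : Fin (m + 1) => V) V}
    {br₁ : MultilinearMap K (fun _ : Fin (m + 1) => W₁) W₁}
    {br₂ : MultilinearMap K (fun _ : Fin (m + 1) => W₂) W₂}
    {α : V →ₗ[K] V} {α₁ : W₁ →ₗ[K] W₁} {α₂ : W₂ →ₗ[K] W₂}
    (f₁ : V →ₗ[K] W₁) (f₂ : V →ₗ[K] W₂)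
    (hinj : ∀ u v, f₁ u = f₁ v → f₂ u = f₂ v → u = v)
    (hgr : ∀ d v, v ∈ gr d ↔ f₁ v ∈ gr₁ d ∧ f₂ v ∈ gr₂ d)
    (hbr₁ : ∀ x, f₁ (br x) = br₁ (f₁ ∘ x))
    (hbr₂ : ∀ x, f₂ (br x) = br₂ (f₂ ∘ x))
    (hα₁ : ∀ v, f₁ (α v) = α₁ (f₁ v)) (hα₂ : ∀ v, f₂ (α v) = α₂ (f₂ v))
    (h₁ : IsHNLS K m gr₁ br₁ α₁) (h₂ : IsHNLS K m gr₂ br₂ α₂) :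
    IsHNLS K m gr br α where
  even_alpha d v hv := by
    rw [hgr, hα₁, hα₂]
    exact ⟨h₁.even_alpha d _ ((hgr d v).1 hv).1, h₂.even_alpha d _ ((hgr d v).1 hv).2⟩
  even_br d x hx := by
    rw [hgr, hbr₁, hbr₂]
    exact ⟨h₁.even_br d _ fun i => ((hgr _ _).1 (hx i)).1,
      h₂.even_br d _ fun i => ((hgr _ _).1 (hx i)).2⟩
  skew d x hx i j hij := by
    apply hinj
    · rw [map_smul, hbr₁, hbr₁]
      exact h₁.skew d _ (fun i => ((hgr _ _).1 (hx i)).1) i j hij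
    · rw [map_smul, hbr₂, hbr₂]
      exact h₂.skew d _ (fun i => ((hgr _ _).1 (hx i)).2) i j hij
  mult x := by
    apply hinj
    · rw [hα₁, hbr₁, hbr₁, h₁.mult]
      simp only [Function.comp_def, hα₁]
    · rw [hα₂, hbr₂, hbr₂, h₂.mult]
      simp only [Function.comp_def, hα₂]
  jacobi dx dy x y hx hy := hinj _ _
    (LinearMap.map_jacobi_eq_of_intertwining f₁ hbr₁ hα₁ _ x y <| h₁.jacobi dx dy _ _
      (fun i => ((hgr _ _).1 (hx i)).1) (fun i => ((hgr _ _).1 (hy i)).1))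
    (LinearMap.map_jacobi_eq_of_intertwining f₂ hbr₂ hα₂ _ x y <| h₂.jacobi dx dy _ _
      (fun i => ((hgr _ _).1 (hx i)).2) (fun i => ((hgr _ _).1 (hy i)).2))

/-- Proposition 1.8: the direct sum of two n-ary multiplicative Hom-Nambu-Lie superalgebras,
with componentwise bracket and twist, is again one. -/
theorem direct_sum_HNLS {K V₁ V₂ : Type*} [Field K]
    [AddCommGroup V₁] [Module K V₁] [AddCommGroup V₂] [Module K V₂] (m : ℕ)
    (gr₁ : ZMod 2 → Submodule K V₁) (gr₂ : ZMod 2 → Submodule K V₂)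
    (br₁ : MultilinearMap K (fun _ : Fin (m + 1) => V₁) V₁)
    (br₂ : MultilinearMap K (fun _ : Fin (m + 1) => V₂) V₂)
    (α : V₁ →ₗ[K] V₁) (β : V₂ →ₗ[K] V₂)
    (h₁ : IsHNLS K m gr₁ br₁ α) (h₂ : IsHNLS K m gr₂ br₂ β) :
    IsHNLS K m (fun d => (gr₁ d).prod (gr₂ d))
      ((br₁.compLinearMap fun _ => LinearMap.fst K V₁ V₂).prod
        (br₂.compLinearMap fun _ => LinearMap.snd K V₁ V₂))
      (α.prodMap β) :=
  IsHNLS.of_jointly_injective (LinearMap.fst K V₁ V₂) (LinearMap.snd K V₁ V₂)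
    (fun _ _ => Prod.ext) (fun _ _ => Iff.rfl) (fun _ => rfl) (fun _ => rfl) (fun _ => rfl)
    (fun _ => rfl) h₁ h₂
end

section
/- Let (g,[·,...,·],α) be an n-ary multiplicative Hom-Nambu-Lie superalgebra and X = x₁∧...∧x_{n-1} ∈ g^{∧(n-1)} with α(xᵢ) = xᵢ for all i. Then for each k ≥ 0 the map ad_k(X) : g → g defined by ad_k(X)(y) = [x₁,...,x_{n-1},α^k(y)] is an α^{k+1}-derivation of g. -/
open Finset

/-- `D` is an `α^k`-derivation of homogeneous degree `dD` of the `(m+1)`-ary multiplicative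
Hom-Nambu-Lie superalgebra `(V, gr, br, α)`. -/
def IsAlphaDer {K V : Type*} [Field K] [AddCommGroup V] [Module K V] (m : ℕ)
    (gr : ZMod 2 → Submodule K V)
    (br : MultilinearMap K (fun _ : Fin (m + 1) => V) V)
    (α : V →ₗ[K] V) (k : ℕ) (dD : ZMod 2) (D : V → V) : Prop :=
  IsLinearMap K D ∧ (∀ v, D (α v) = α (D v)) ∧
    (∀ (d : ZMod 2), ∀ v ∈ gr d, D v ∈ gr (dD + d)) ∧
    ∀ (d : Fin (m + 1) → ZMod 2) (x : Fin (m + 1) → V), (∀ i, x i ∈ gr (d i)) →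
      D (br x) = ∑ i : Fin (m + 1),
        ((-1 : K) ^ ((dD * ∑ j ∈ univ.filter (fun j => j < i), d j).val)) •
          br (Function.update (fun j => (α ^ k) (x j)) i (D (x i)))

/-! Since `α` fixes the `xᵢ` and is multiplicative, `α^k` may be pushed inside the bracket
and `x` rewritten as `α ∘ x`; the derivation rule for `ad_k(X)` on `[z₀, …, z_m]` is then
exactly the Hom-super-Jacobi identity applied to `x` and `α^k ∘ z`. -/

section

variable {R M : Type*} [Semiring R] [AddCommMonoid M] [Module R M]

lemma Module.End.pow_apply_mem {p : Submodule R M} {f : Module.End R M}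
    (hf : ∀ v ∈ p, f v ∈ p) (n : ℕ) {v : M} (hv : v ∈ p) : (f ^ n) v ∈ p := by
  rw [Module.End.pow_apply]
  exact Set.MapsTo.iterate hf n hv

lemma Module.End.pow_apply_multilinearMap {ι : Type*}
    {br : MultilinearMap R (fun _ : ι => M) M} {f : Module.End R M}
    (hf : ∀ z, f (br z) = br fun i => f (z i)) (n : ℕ) (z : ι → M) :
    (f ^ n) (br z) = br fun i => (f ^ n) (z i) := by
  induction n generalizing z with
  | zero => rfl
  | succ n ih => rw [pow_succ', Module.End.mul_apply, ih, hf]; rfl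

lemma MultilinearMap.isLinearMap_snoc_comp {n : ℕ}
    (br : MultilinearMap R (fun _ : Fin (n + 1) => M) M) (x : Fin n → M) (f : M →ₗ[R] M) :
    IsLinearMap R fun v => br (Fin.snoc x (f v)) := by
  simpa [Function.comp_def, Fin.update_snoc_last] using
    ((br.toLinearMap (Fin.snoc x 0) (Fin.last n)).comp f).isLinear

lemma MultilinearMap.snoc_pow_apply_map_of_fixed {n : ℕ}
    {br : MultilinearMap R (fun _ : Fin (n + 1) => M) M} {α : Module.End R M}
    (hα : ∀ z, α (br z) = br fun i => α (z i)) {x : Fin n → M} (hfix : ∀ i, α (x i) = x i)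
    (k : ℕ) (v : M) :
    br (Fin.snoc x ((α ^ k) (α v))) = α (br (Fin.snoc x ((α ^ k) v))) := by
  rw [hα, ← Module.End.mul_apply, ← pow_succ, pow_succ', Module.End.mul_apply]
  change _ = br (α ∘ Fin.snoc x _)
  rw [Fin.comp_snoc, Function.comp_def]
  simp only [hfix]

end

namespace IsHNLS

variable {K V : Type*} [Field K] [AddCommGroup V] [Module K V] {m : ℕ}
  {gr : ZMod 2 → Submodule K V} {br : MultilinearMap K (fun _ : Fin (m + 1) => V) V}
  {α : V →ₗ[K] V} {dx : Fin m → ZMod 2} {x : Fin m → V}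

lemma snoc_pow_mem (h : IsHNLS K m gr br α) (hx : ∀ i, x i ∈ gr (dx i)) (k : ℕ) {d : ZMod 2}
    {v : V} (hv : v ∈ gr d) : br (Fin.snoc x ((α ^ k) v)) ∈ gr (∑ i, dx i + d) := by
  rw [← Fin.sum_snoc]
  refine h.even_br _ _ fun i => Fin.lastCases ?_ (fun j => ?_) i
  · simpa using Module.End.pow_apply_mem (h.even_alpha d) k hv
  · simpa using hx j

lemma snoc_pow_br_eq_sum (h : IsHNLS K m gr br α) (hx : ∀ i, x i ∈ gr (dx i))
    (hfix : ∀ i, α (x i) = x i) (k : ℕ) (dz : Fin (m + 1) → ZMod 2) (z : Fin (m + 1) → V)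
    (hz : ∀ i, z i ∈ gr (dz i)) :
    br (Fin.snoc x ((α ^ k) (br z))) = ∑ i : Fin (m + 1),
      ((-1 : K) ^ (((∑ j, dx j) * ∑ j ∈ univ.filter (fun j => j < i), dz j).val)) •
        br (Function.update (fun j => (α ^ (k + 1)) (z j)) i
          (br (Fin.snoc x ((α ^ k) (z i))))) := by
  have hz' i : (α ^ k) (z i) ∈ gr (dz i) := Module.End.pow_apply_mem (h.even_alpha _) k (hz i)
  conv_lhs => rw [Module.End.pow_apply_multilinearMap h.mult, ← funext hfix]
  rw [h.jacobi dx dz x _ hx hz']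
  simp only [pow_succ', Module.End.mul_apply]

end IsHNLS

/-- Lemma 2.2: for `X = x₁∧…∧x_m` with `α(xᵢ) = xᵢ`, the map
`ad_k(X)(y) = [x₁,…,x_m, α^k(y)]` is an `α^{k+1}`-derivation of degree `|x₁|+…+|x_m|`. -/
theorem ad_is_alpha_der {K V : Type*} [Field K] [AddCommGroup V] [Module K V] (m : ℕ)
    (gr : ZMod 2 → Submodule K V)
    (br : MultilinearMap K (fun _ : Fin (m + 1) => V) V)
    (α : V →ₗ[K] V) (h : IsHNLS K m gr br α) (k : ℕ)
    (dx : Fin m → ZMod 2) (x : Fin m → V)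
    (hx : ∀ i, x i ∈ gr (dx i)) (hfix : ∀ i, α (x i) = x i) :
    IsAlphaDer m gr br α (k + 1) (∑ i, dx i)
      (fun v => br (Fin.snoc x ((α ^ k) v))) :=
  ⟨br.isLinearMap_snoc_comp x (α ^ k), br.snoc_pow_apply_map_of_fixed h.mult hfix k,
    fun _ _ => h.snoc_pow_mem hx k, h.snoc_pow_br_eq_sum hx hfix k⟩
end

section
/- If D is an α^k-derivation and D' an α^{k'}-derivation of an n-ary multiplicative Hom-Nambu-Lie superalgebra (g,[·,...,·],α), both homogeneous, then the supercommutator [D,D'] = D∘D' − (−1)^{|D||D'|} D'∘D is an α^{k+k'}-derivation of g. -/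
open Finset

/-!
Applying the derivation rule twice writes `D (D' [x₁, …, xₙ])` as a double sum over pairs of
positions `(i, l)`: for `i = l` the term is `[α^{k+k'} x₁, …, D D' xᵢ, …, α^{k+k'} xₙ]`, for
`i ≠ l` it carries `α^k D' xᵢ` in slot `i` and `α^{k'} D xₗ` in slot `l`. The same off-diagonal
brackets occur in `D' (D [x₁, …, xₙ])`, with signs differing exactly by `(-1)^{|D||D'|}` because
`D` passes `D' xᵢ` when `i < l` and `D'` passes `D xₗ` when `l < i`. So in the supercommutator
they cancel, and the diagonal terms give the `α^{k+k'}`-derivation rule.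
-/

open Function

lemma neg_one_pow_zmod_two_val_add {R : Type*} [Ring R] (a b : ZMod 2) :
    (-1 : R) ^ (a + b).val = (-1) ^ a.val * (-1) ^ b.val := by
  rw [ZMod.val_add, ← neg_one_pow_eq_pow_mod_two, pow_add]

def prefixDeg {n : ℕ} (d : Fin n → ZMod 2) (i : Fin n) : ZMod 2 :=
  ∑ j ∈ univ.filter (fun j => j < i), d j

lemma prefixDeg_update_add_self {n : ℕ} (d : Fin n → ZMod 2) (i l : Fin n) (e : ZMod 2) :
    prefixDeg (update d i (e + d i)) l = (if i < l then e else 0) + prefixDeg d l := by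
  have hd : update d i (e + d i) = Pi.single i e + d := by
    ext j
    rcases eq_or_ne j i with rfl | hji
    · simp
    · simp [hji]
  simp [prefixDeg, hd, sum_add_distrib, sum_pi_single']

lemma pow_apply_update_pow {R M ι : Type*} [CommSemiring R] [AddCommMonoid M] [Module R M]
    [DecidableEq ι] (α : M →ₗ[R] M) (k k' : ℕ) (x : ι → M) (i : ι) (v : M) :
    (fun j => (α ^ k) (update (fun j => (α ^ k') (x j)) i v j)) =
      update (fun j => (α ^ (k + k')) (x j)) i ((α ^ k) v) := by
  ext j
  rcases eq_or_ne j i with rfl | hji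
  · simp
  · simp [hji, pow_add]

section

variable {K V : Type*} [Field K] [AddCommGroup V] [Module K V] {m : ℕ}
  {gr : ZMod 2 → Submodule K V} {br : MultilinearMap K (fun _ : Fin (m + 1) => V) V}
  {α : V →ₗ[K] V}

lemma IsHNLS.pow_apply_mem (h : IsHNLS K m gr br α) (n : ℕ) {e : ZMod 2} {v : V}
    (hv : v ∈ gr e) : (α ^ n) v ∈ gr e :=
  Module.End.pow_apply_mem_of_forall_mem n (h.even_alpha e) v hv

namespace IsAlphaDer

variable {k k' : ℕ} {dD dD' : ZMod 2} {D D' : V → V} {d : Fin (m + 1) → ZMod 2}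
  {x : Fin (m + 1) → V}

lemma mem_gr (hD : IsAlphaDer m gr br α k dD D) {e : ZMod 2} {v : V} (hv : v ∈ gr e) :
    D v ∈ gr (dD + e) :=
  hD.2.2.1 e v hv

lemma comm_pow (hD : IsAlphaDer m gr br α k dD D) (n : ℕ) (v : V) :
    D ((α ^ n) v) = (α ^ n) (D v) := by
  rw [Module.End.coe_pow]
  exact Function.Commute.iterate_right (f := D) (g := α) hD.2.1 n v

lemma map_sum (hD : IsAlphaDer m gr br α k dD D) {ι : Type*} (s : Finset ι) (f : ι → V) :
    D (∑ i ∈ s, f i) = ∑ i ∈ s, D (f i) :=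
  _root_.map_sum (IsLinearMap.mk' D hD.1) f s

lemma map_br (hD : IsAlphaDer m gr br α k dD D) (hx : ∀ i, x i ∈ gr (d i)) :
    D (br x) = ∑ i, (-1 : K) ^ ((dD * prefixDeg d i).val) •
      br (update (fun j => (α ^ k) (x j)) i (D (x i))) :=
  hD.2.2.2 d x hx

lemma update_mem (h : IsHNLS K m gr br α) (hD : IsAlphaDer m gr br α k dD D)
    (hx : ∀ i, x i ∈ gr (d i)) (i j : Fin (m + 1)) :
    update (fun j => (α ^ k) (x j)) i (D (x i)) j ∈ gr (update d i (dD + d i) j) := by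
  rcases eq_or_ne j i with rfl | hji
  · simpa using hD.mem_gr (hx j)
  · simpa [hji] using h.pow_apply_mem k (hx j)

lemma comp_map_br (h : IsHNLS K m gr br α) (hD : IsAlphaDer m gr br α k dD D)
    (hD' : IsAlphaDer m gr br α k' dD' D') (hx : ∀ i, x i ∈ gr (d i)) :
    D (D' (br x)) = ∑ i, ∑ l,
      (-1 : K) ^ ((dD' * prefixDeg d i + dD * ((if i < l then dD' else 0) + prefixDeg d l)).val) •
        br (update (update (fun j => (α ^ (k + k')) (x j)) i ((α ^ k) (D' (x i)))) l
          (D (update (fun j => (α ^ k') (x j)) i (D' (x i)) l))) := by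
  rw [hD'.map_br hx, hD.map_sum]
  refine sum_congr rfl fun i _ => ?_
  rw [hD.1.map_smul, hD.map_br (hD'.update_mem h hx i), smul_sum]
  refine sum_congr rfl fun l _ => ?_
  rw [smul_smul, ← neg_one_pow_zmod_two_val_add, prefixDeg_update_add_self,
    pow_apply_update_pow]

lemma supercommutator_map_br (h : IsHNLS K m gr br α) (hD : IsAlphaDer m gr br α k dD D)
    (hD' : IsAlphaDer m gr br α k' dD' D') (hx : ∀ i, x i ∈ gr (d i)) :
    D (D' (br x)) - (-1 : K) ^ ((dD * dD').val) • D' (D (br x)) =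
      ∑ i, (-1 : K) ^ (((dD + dD') * prefixDeg d i).val) •
        br (update (fun j => (α ^ (k + k')) (x j)) i
          (D (D' (x i)) - (-1 : K) ^ ((dD * dD').val) • D' (D (x i)))) := by
  have hD'D := hD'.comp_map_br h hD hx
  rw [add_comm k'] at hD'D
  rw [hD.comp_map_br h hD' hx, hD'D, sum_comm, smul_sum, ← sum_sub_distrib]
  refine sum_congr rfl fun i _ => ?_
  rw [smul_sum, ← sum_sub_distrib, sum_eq_single i ?_ (by simp)]
  · simp only [lt_irrefl, if_false, zero_add, update_idem, update_self]
    rw [br.map_update_sub, br.map_update_smul, add_comm (dD * _), add_mul, add_comm (dD * _),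
      neg_one_pow_zmod_two_val_add]
    module
  · intro l _ hli
    simp only [update_of_ne hli, update_of_ne hli.symm, hD.comm_pow, hD'.comm_pow]
    rw [update_comm hli, smul_smul, ← neg_one_pow_zmod_two_val_add, sub_eq_zero]
    congr 3
    rcases hli.lt_or_gt with hli | hil
    · simp only [hli, hli.not_gt, if_true, if_false, zero_add]
      ring
    · simp only [hil, hil.not_gt, if_true, if_false, zero_add]
      linear_combination -(dD * dD') * CharTwo.two_eq_zero (R := ZMod 2)

end IsAlphaDer

end

/-- Lemma 2.3: the supercommutator of an `α^k`-derivation and an `α^{k'}`-derivation is an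
`α^{k+k'}`-derivation. -/
theorem supercommutator_der {K V : Type*} [Field K] [AddCommGroup V] [Module K V] (m : ℕ)
    (gr : ZMod 2 → Submodule K V)
    (br : MultilinearMap K (fun _ : Fin (m + 1) => V) V)
    (α : V →ₗ[K] V) (h : IsHNLS K m gr br α)
    (k k' : ℕ) (dD dD' : ZMod 2) (D D' : V → V)
    (hD : IsAlphaDer m gr br α k dD D) (hD' : IsAlphaDer m gr br α k' dD' D') :
    IsAlphaDer m gr br α (k + k') (dD + dD')
      (fun v => D (D' v) - ((-1 : K) ^ ((dD * dD').val)) • D' (D v)) := by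
  refine ⟨⟨fun u v => ?_, fun a v => ?_⟩, fun v => ?_, fun e v hv => ?_,
    fun d x hx => hD.supercommutator_map_br h hD' hx⟩
  · simp only [hD.1.map_add, hD'.1.map_add, smul_add]
    abel
  · simp only [hD.1.map_smul, hD'.1.map_smul, smul_sub, smul_comm a]
  · simp only [hD.2.1, hD'.2.1, map_sub, map_smul]
  · refine sub_mem ?_ (Submodule.smul_mem _ _ ?_)
    · simpa only [add_assoc] using hD.mem_gr (hD'.mem_gr hv)
    · rw [show dD + dD' + e = dD' + (dD + e) by ring]
      exact hD'.mem_gr (hD.mem_gr hv)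
end

section
/- If f_t and f'_t are equivalent one-parameter formal deformations of an n-ary multiplicative Hom-Nambu-Lie superalgebra (g,[·,...,·],α), then the infinitesimals satisfy f₁ − f'₁ = δ¹φ₁ for some even linear map φ₁ commuting with α; in particular f₁ and f'₁ define the same class in the second cohomology group H²(g,g). -/
open Finset

/-- A one-parameter formal deformation `f_t = Σ fₚ tᵖ` of the bracket `br`: each coefficient is
an even super-skew `(m+1)`-linear map commuting with `α`, `f₀ = br`, and the deformation
equations (coefficientwise Hom-super-Jacobi identities) hold. -/
def IsDeformation {K V : Type*} [Field K] [AddCommGroup V] [Module K V] (m : ℕ)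
    (gr : ZMod 2 → Submodule K V)
    (br : MultilinearMap K (fun _ : Fin (m + 1) => V) V)
    (α : V →ₗ[K] V)
    (f : ℕ → MultilinearMap K (fun _ : Fin (m + 1) => V) V) : Prop :=
  f 0 = br ∧
  (∀ p (x : Fin (m + 1) → V), α (f p x) = f p fun i => α (x i)) ∧
  (∀ p (d : Fin (m + 1) → ZMod 2) (x : Fin (m + 1) → V),
      (∀ i, x i ∈ gr (d i)) → f p x ∈ gr (∑ i, d i)) ∧
  (∀ p (d : Fin (m + 1) → ZMod 2) (x : Fin (m + 1) → V),
      (∀ i, x i ∈ gr (d i)) → ∀ i j : Fin (m + 1), (i : ℕ) + 1 = (j : ℕ) →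
      f p x = -((-1 : K) ^ (d i * d j).val) • f p (x ∘ Equiv.swap i j)) ∧
  ∀ (l : ℕ) (dx : Fin m → ZMod 2) (dy : Fin (m + 1) → ZMod 2)
      (x : Fin m → V) (y : Fin (m + 1) → V),
      (∀ i, x i ∈ gr (dx i)) → (∀ i, y i ∈ gr (dy i)) →
      ∑ p ∈ Finset.range (l + 1), f p (Fin.snoc (fun i => α (x i)) (f (l - p) y)) =
        ∑ i : Fin (m + 1),
          ((-1 : K) ^ (((∑ j, dx j) * ∑ j ∈ univ.filter (fun j => j < i), dy j).val)) •
            ∑ p ∈ Finset.range (l + 1),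
              f p (Function.update (fun j => α (y j)) i (f (l - p) (Fin.snoc x (y i))))

/-- `c` is a 2-cocycle (`δ² c = 0`) of the Hom-Nambu-Lie superalgebra cohomology with adjoint
coefficients. -/
def Cocycle2 {K V : Type*} [Field K] [AddCommGroup V] [Module K V] (m : ℕ)
    (gr : ZMod 2 → Submodule K V)
    (br : MultilinearMap K (fun _ : Fin (m + 1) => V) V)
    (α : V →ₗ[K] V)
    (c : MultilinearMap K (fun _ : Fin (m + 1) => V) V) : Prop :=
  ∀ (dx : Fin m → ZMod 2) (dy : Fin (m + 1) → ZMod 2)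
    (x : Fin m → V) (y : Fin (m + 1) → V),
    (∀ i, x i ∈ gr (dx i)) → (∀ i, y i ∈ gr (dy i)) →
    br (Fin.snoc (fun i => α (x i)) (c y)) + c (Fin.snoc (fun i => α (x i)) (br y)) =
      ∑ i : Fin (m + 1),
        ((-1 : K) ^ (((∑ j, dx j) * ∑ j ∈ univ.filter (fun j => j < i), dy j).val)) •
          (br (Function.update (fun j => α (y j)) i (c (Fin.snoc x (y i)))) +
            c (Function.update (fun j => α (y j)) i (br (Fin.snoc x (y i)))))

/-- `c = δ¹ψ` is the coboundary of the 1-cochain `ψ`. -/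
def IsCoboundaryOf {K V : Type*} [Field K] [AddCommGroup V] [Module K V] (m : ℕ)
    (br : MultilinearMap K (fun _ : Fin (m + 1) => V) V)
    (ψ : V →ₗ[K] V)
    (c : MultilinearMap K (fun _ : Fin (m + 1) => V) V) : Prop :=
  ∀ x : Fin (m + 1) → V,
    c x = -ψ (br x) + ∑ i : Fin (m + 1), br (Function.update x i (ψ (x i)))

/-- The deformations `f` and `f'` are equivalent via the formal isomorphism
`Φ_t = Σ φᵢ tⁱ` : `φ₀ = id`, each `φᵢ` is even and commutes with `α`, and
`Φ_t ∘ f_t = f'_t ∘ (Φ_t × ⋯ × Φ_t)` coefficientwise. -/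
def AreEquivalent {K V : Type*} [Field K] [AddCommGroup V] [Module K V] (m : ℕ)
    (gr : ZMod 2 → Submodule K V)
    (α : V →ₗ[K] V)
    (f f' : ℕ → MultilinearMap K (fun _ : Fin (m + 1) => V) V)
    (φ : ℕ → V →ₗ[K] V) : Prop :=
  φ 0 = LinearMap.id ∧
  (∀ i v, φ i (α v) = α (φ i v)) ∧
  (∀ i (d : ZMod 2), ∀ v ∈ gr d, φ i v ∈ gr d) ∧
  ∀ (l : ℕ) (x : Fin (m + 1) → V),
    ∑ p ∈ Finset.range (l + 1), φ p (f (l - p) x) =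
      ∑ j ∈ Finset.Nat.antidiagonalTuple (m + 2) l, f' (j 0) fun i => φ (j i.succ) (x i)


lemma tuple_sum_eq_one {k : ℕ} (j : Fin k → ℕ) (hj : ∑ i, j i = 1) :
    ∃ i, j = Pi.single i 1 := by
  have hne : ∃ i, j i ≠ 0 := by
    by_contra hc
    push_neg at hc
    simp [hc] at hj
  obtain ⟨i, hi⟩ := hne
  refine ⟨i, funext fun i' => ?_⟩
  have hle : j i ≤ 1 := hj ▸ Finset.single_le_sum (fun _ _ => Nat.zero_le _) (Finset.mem_univ i)
  have hji : j i = 1 := le_antisymm hle (Nat.one_le_iff_ne_zero.2 hi)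
  have hrest : ∑ x ∈ Finset.univ.erase i, j x = 0 := by
    have := Finset.add_sum_erase Finset.univ j (Finset.mem_univ i)
    omega
  rcases eq_or_ne i' i with rfl | hne'
  · simp [hji]
  · have : j i' = 0 := by
      have := Finset.sum_eq_zero_iff.1 hrest i' (Finset.mem_erase.2 ⟨hne', Finset.mem_univ _⟩)
      exact this
    simp [this, Pi.single_eq_of_ne hne']

lemma antidiagonalTuple_one_eq (k : ℕ) :
    Finset.Nat.antidiagonalTuple k 1 =
      Finset.univ.image (fun i : Fin k => Pi.single i 1) := by
  ext j
  simp only [Finset.Nat.mem_antidiagonalTuple, Finset.mem_image, Finset.mem_univ, true_and]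
  constructor
  · intro hj
    obtain ⟨i, hi⟩ := tuple_sum_eq_one j hj
    exact ⟨i, hi.symm⟩
  · rintro ⟨i, rfl⟩
    simp [Finset.sum_pi_single']

lemma pi_single_inj {k : ℕ} : Function.Injective (fun i : Fin k => Pi.single i (1 : ℕ)) := by
  intro a b hab
  by_contra hne
  have h1 := congrFun hab a
  simp only [Pi.single_eq_same, Pi.single_eq_of_ne hne] at h1
  exact one_ne_zero h1

/-- Theorem 3.5: equivalent deformations have cohomologous infinitesimals:
`f₁ − f'₁ = δ¹φ₁` for some even linear map commuting with `α`, so `f₁` and `f'₁` define the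
same class in `H²(g,g)`. -/
theorem equivalent_deformations_cohomologous {K V : Type*} [Field K] [AddCommGroup V]
    [Module K V] (m : ℕ)
    (gr : ZMod 2 → Submodule K V)
    (br : MultilinearMap K (fun _ : Fin (m + 1) => V) V)
    (α : V →ₗ[K] V) (h : IsHNLS K m gr br α)
    (f f' : ℕ → MultilinearMap K (fun _ : Fin (m + 1) => V) V)
    (hf : IsDeformation m gr br α f) (hf' : IsDeformation m gr br α f')
    (φ : ℕ → V →ₗ[K] V) (heq : AreEquivalent m gr α f f' φ) :
    ∃ ψ : V →ₗ[K] V, (∀ v, ψ (α v) = α (ψ v)) ∧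
      (∀ (d : ZMod 2), ∀ v ∈ gr d, ψ v ∈ gr d) ∧
      IsCoboundaryOf m br ψ (f 1 - f' 1) := by
  obtain ⟨hφ0, hφα, hφgr, hl⟩ := heq
  refine ⟨φ 1, fun v => hφα 1 v, hφgr 1, fun x => ?_⟩
  have key := hl 1 x
  rw [antidiagonalTuple_one_eq, Finset.sum_image (fun a _ b _ hab => pi_single_inj hab)] at key
  rw [Fin.sum_univ_succ] at key
  have h0 : (f' ((Pi.single (0 : Fin (m + 2)) 1 : Fin (m + 2) → ℕ) 0)
      fun i => φ ((Pi.single (0 : Fin (m + 2)) 1 : Fin (m + 2) → ℕ) i.succ) (x i)) = f' 1 x := by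
    simp [Pi.single_apply, Fin.succ_ne_zero, hφ0]
  have hterm : ∀ k : Fin (m + 1),
      (f' ((Pi.single (k.succ : Fin (m + 2)) 1 : Fin (m + 2) → ℕ) 0)
        fun i => φ ((Pi.single (k.succ : Fin (m + 2)) 1 : Fin (m + 2) → ℕ) i.succ) (x i)) =
      br (Function.update x k (φ 1 (x k))) := by
    intro k
    have hz : (Pi.single (k.succ : Fin (m + 2)) 1 : Fin (m + 2) → ℕ) 0 = 0 :=
      Pi.single_eq_of_ne (Fin.succ_ne_zero k).symm 1
    rw [hz, hf'.1]
    congr 1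
    funext i
    rcases eq_or_ne i k with rfl | hik
    · simp [Pi.single_eq_same]
    · rw [Pi.single_eq_of_ne (fun hc => hik (Fin.succ_injective _ hc)), hφ0,
        Function.update_of_ne hik]
      rfl
  rw [h0] at key
  simp only [hterm] at key
  have hlhs : ∑ p ∈ Finset.range 2, φ p (f (1 - p) x) = f 1 x + φ 1 (br x) := by
    rw [Finset.sum_range_succ, Finset.sum_range_one, hφ0, hf.1]
    simp [add_comm]
  rw [hlhs] at key
  have hf1 : f 1 x =
      f' 1 x + (∑ i : Fin (m + 1), br (Function.update x i (φ 1 (x i)))) - φ 1 (br x) :=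
    eq_sub_iff_add_eq.mpr key
  show f 1 x - f' 1 x = _
  rw [hf1]
  abel
end

section
/- Let (g,[·,...,·],α) be an n-ary multiplicative Hom-Nambu-Lie superalgebra and f_t = f₀ + f_r t^r + f_{r+1} t^{r+1} + ... a deformation with f₁ = ... = f_{r-1} = 0. Then f_r is an even 2-cocycle: δ²f_r = 0. -/
open Finset

lemma sum_range_endpoints {M : Type*} [AddCommMonoid M] {r : ℕ} (hr : 1 ≤ r)
    (g : ℕ → M) (h0 : ∀ p, 0 < p → p < r → g p = 0) :
    ∑ p ∈ Finset.range (r + 1), g p = g 0 + g r := by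
  rw [Finset.sum_range_succ]
  congr 1
  apply Finset.sum_eq_single_of_mem 0 (Finset.mem_range.mpr (by omega))
  intro b hb hb0
  exact h0 b (Nat.pos_of_ne_zero hb0) (Finset.mem_range.mp hb)

/-- If `f_t = f₀ + f_r t^r + …` is a deformation with `f₁ = ⋯ = f_{r-1} = 0`, then `f_r` is an
even 2-cocycle: `δ² f_r = 0`. -/
theorem first_nonzero_coefficient_is_cocycle {K V : Type*} [Field K] [AddCommGroup V]
    [Module K V] (m : ℕ)
    (gr : ZMod 2 → Submodule K V)
    (br : MultilinearMap K (fun _ : Fin (m + 1) => V) V)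
    (α : V →ₗ[K] V) (h : IsHNLS K m gr br α)
    (f : ℕ → MultilinearMap K (fun _ : Fin (m + 1) => V) V)
    (hf : IsDeformation m gr br α f)
    (r : ℕ) (hr : 1 ≤ r) (hvanish : ∀ p, 1 ≤ p → p < r → f p = 0) :
    Cocycle2 m gr br α (f r) := by
  obtain ⟨h0, -, -, -, hdef⟩ := hf
  intro dx dy x y hx hy
  have key := hdef r dx dy x y hx hy
  have L : ∑ p ∈ Finset.range (r + 1), f p (Fin.snoc (fun i => α (x i)) (f (r - p) y))
      = br (Fin.snoc (fun i => α (x i)) ((f r) y)) +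
        (f r) (Fin.snoc (fun i => α (x i)) (br y)) := by
    rw [sum_range_endpoints hr _ (fun p hp hpr => by rw [hvanish p hp hpr]; rfl)]
    rw [Nat.sub_self, Nat.sub_zero, h0]
  rw [L] at key
  rw [key]
  refine Finset.sum_congr rfl fun i _ => ?_
  congr 1
  rw [sum_range_endpoints hr _ (fun p hp hpr => by rw [hvanish p hp hpr]; rfl)]
  rw [Nat.sub_self, Nat.sub_zero, h0]
end
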